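/- Let A : X → Y and A' : X' → Y' be compact injective operators between Hilbert spaces over ℝ or ℂ admitting infinite-rank singular value decompositions A x = ∑'_{n∈ℕ} σ(n) ⟪φ(n), x⟫ ψ(n) and A' x = ∑'_{n∈ℕ} σ'(n) ⟪φ'(n), x⟫ ψ'(n), where (φ(n)) is an orthonormal basis (total orthonormal family) of X and (φ'(n)) is an orthonormal basis of X'. Assume there are constants c, C > 0 with c σ'(n) ≤ σ(n) ≤ C σ'(n) for all n. Then there exist a continuous linear equivalence S : X' ≃ X (a bounded bijective linear map with bounded inverse) and a bounded linear operator U : Y → Y' with ‖U y‖ = ‖y‖ for every y in the closure of the range of A and with U mapping the closure of the range of A onto the closure of the range of A', such that A' = U ∘ A ∘ S. -/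

import Mathlib

/-!
Both operators are diagonal in their singular systems: `A (φ n) = σ n • ψ n`. The comparison
`c σ' ≤ σ ≤ C σ'` makes the weights `σ' n / σ n` bounded with bounded inverses, so the diagonal
operator with these weights on `ℓ²`, transported by the Hilbert bases `φ'` and `φ`, is an
isomorphism `S` with `S (φ' n) = (σ' n / σ n) • φ n`. For `U` take `V' ∘ V†`, where
`V, V' : ℓ² → Y, Y'` are the isometries onto the closed spans of `ψ, ψ'`: it sends `ψ n` to `ψ' n`
and maps the closed span of `ψ`, which is the closure of the range of `A`, isometrically onto
that of `ψ'`. Then `A'` and `U ∘ A ∘ S` agree on the total family `φ'`.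
-/

open ContinuousLinearMap Filter
open scoped ENNReal

theorem Memℓp.smul_of_forall_norm_le {𝕜 ι : Type*} [NormedRing 𝕜] {E : ι → Type*}
    [∀ i, NormedAddCommGroup (E i)] [∀ i, Module 𝕜 (E i)] [∀ i, IsBoundedSMul 𝕜 (E i)]
    {p : ℝ≥0∞} {w : ι → 𝕜} {M : ℝ} (hw : ∀ i, ‖w i‖ ≤ M) {f : ∀ i, E i} (hf : Memℓp f p) :
    Memℓp (fun i => w i • f i) p :=
  (hf.norm.const_mul M).mono fun i =>
    (norm_smul_le _ _).trans (mul_le_mul_of_nonneg_right (hw i) (norm_nonneg _))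

namespace lp

variable {𝕜 ι : Type*} [RCLike 𝕜] {E : ι → Type*} [∀ i, NormedAddCommGroup (E i)]
  [∀ i, NormedSpace 𝕜 (E i)] {p : ℝ≥0∞} [Fact (1 ≤ p)]

noncomputable def diagonal (w : ι → 𝕜) {M : ℝ} (hw : ∀ i, ‖w i‖ ≤ M) : lp E p →L[𝕜] lp E p :=
  LinearMap.mkContinuous
    { toFun := fun f => ⟨fun i => w i • f i, (lp.memℓp f).smul_of_forall_norm_le hw⟩
      map_add' := fun f g => lp.ext <| funext fun i => smul_add (w i) (f i) (g i)
      map_smul' := fun c f => lp.ext <| funext fun i => smul_comm (w i) c (f i) }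
    |M| fun f => by
      have hp : p ≠ 0 := (zero_lt_one.trans_le (Fact.out : (1 : ℝ≥0∞) ≤ p)).ne'
      calc _ ≤ ‖(M : 𝕜) • f‖ := lp.norm_mono hp fun i => by
            change ‖w i • f i‖ ≤ ‖(M : 𝕜) • f i‖
            rw [norm_smul, norm_smul, RCLike.norm_ofReal]
            gcongr
            exact (hw i).trans (le_abs_self M)
        _ = |M| * ‖f‖ := by rw [norm_smul, RCLike.norm_ofReal]

@[simp]
theorem diagonal_apply (w : ι → 𝕜) {M : ℝ} (hw : ∀ i, ‖w i‖ ≤ M) (f : lp E p) (i : ι) :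
    diagonal w hw f i = w i • f i :=
  rfl

theorem diagonal_single [DecidableEq ι] (w : ι → 𝕜) {M : ℝ} (hw : ∀ i, ‖w i‖ ≤ M) (i : ι)
    (x : E i) : diagonal w hw (lp.single p i x) = lp.single p i (w i • x) := by
  ext j
  by_cases hj : j = i
  · subst hj; simp
  · simp [hj]

noncomputable def diagonalEquiv (w : ι → 𝕜) {M M' : ℝ} (hw : ∀ i, ‖w i‖ ≤ M)
    (hw' : ∀ i, ‖(w i)⁻¹‖ ≤ M') (hw0 : ∀ i, w i ≠ 0) : lp E p ≃L[𝕜] lp E p :=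
  ContinuousLinearEquiv.equivOfInverse (diagonal w hw) (diagonal (fun i => (w i)⁻¹) hw')
    (fun f => lp.ext <| funext fun i => inv_smul_smul₀ (hw0 i) (f i))
    (fun f => lp.ext <| funext fun i => smul_inv_smul₀ (hw0 i) (f i))

theorem diagonalEquiv_single [DecidableEq ι] (w : ι → 𝕜) {M M' : ℝ} (hw : ∀ i, ‖w i‖ ≤ M)
    (hw' : ∀ i, ‖(w i)⁻¹‖ ≤ M') (hw0 : ∀ i, w i ≠ 0) (i : ι) (x : E i) :
    diagonalEquiv w hw hw' hw0 (lp.single p i x) = lp.single p i (w i • x) :=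
  diagonal_single w hw i x

end lp

namespace HilbertBasis

variable {𝕜 ι E E' : Type*} [RCLike 𝕜]
  [NormedAddCommGroup E] [InnerProductSpace 𝕜 E] [NormedAddCommGroup E'] [InnerProductSpace 𝕜 E']

theorem exists_continuousLinearEquiv_apply_eq_smul (b : HilbertBasis ι 𝕜 E)
    (b' : HilbertBasis ι 𝕜 E') (w : ι → 𝕜) {M M' : ℝ} (hw : ∀ i, ‖w i‖ ≤ M)
    (hw' : ∀ i, ‖(w i)⁻¹‖ ≤ M') (hw0 : ∀ i, w i ≠ 0) :
    ∃ S : E' ≃L[𝕜] E, ∀ i, S (b' i) = w i • b i := by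
  classical
  refine ⟨b'.repr.toContinuousLinearEquiv.trans
    ((lp.diagonalEquiv w hw hw' hw0).trans b.repr.symm.toContinuousLinearEquiv), fun i => ?_⟩
  change b.repr.symm (lp.diagonalEquiv w hw hw' hw0 (b'.repr (b' i))) = _
  rw [b'.repr_self, lp.diagonalEquiv_single, lp.single_smul, map_smul, b.repr_symm_single]

end HilbertBasis

namespace Orthonormal

variable {𝕜 ι Y Y' : Type*} [RCLike 𝕜]
  [NormedAddCommGroup Y] [InnerProductSpace 𝕜 Y] [CompleteSpace Y]
  [NormedAddCommGroup Y'] [InnerProductSpace 𝕜 Y'] [CompleteSpace Y']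
  {ψ : ι → Y} {ψ' : ι → Y'}

theorem range_linearIsometry (hψ : Orthonormal 𝕜 ψ) :
    Set.range hψ.orthogonalFamily.linearIsometry = closure (Submodule.span 𝕜 (Set.range ψ)) := by
  rw [← Submodule.topologicalClosure_coe]
  convert congrArg SetLike.coe hψ.orthogonalFamily.range_linearIsometry using 3
  · exact (LinearMap.coe_range _).symm
  · simp [← LinearMap.span_singleton_eq_range, ← Submodule.span_iUnion]

noncomputable def partialIsometry (hψ : Orthonormal 𝕜 ψ) (hψ' : Orthonormal 𝕜 ψ') : Y →L[𝕜] Y' :=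
  hψ'.orthogonalFamily.linearIsometry.toContinuousLinearMap ∘L
    hψ.orthogonalFamily.linearIsometry.toContinuousLinearMap.adjoint

theorem partialIsometry_apply_linearIsometry (hψ : Orthonormal 𝕜 ψ) (hψ' : Orthonormal 𝕜 ψ')
    (f : lp (fun _ : ι => 𝕜) 2) :
    hψ.partialIsometry hψ' (hψ.orthogonalFamily.linearIsometry f) =
      hψ'.orthogonalFamily.linearIsometry f := by
  have h := DFunLike.congr_fun hψ.orthogonalFamily.linearIsometry.adjoint_comp_self f
  simp only [comp_apply, one_apply_eq_self, LinearIsometry.coe_toContinuousLinearMap] at h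
  simp only [partialIsometry, comp_apply, LinearIsometry.coe_toContinuousLinearMap, h]

theorem linearIsometry_single_one [DecidableEq ι] (hψ : Orthonormal 𝕜 ψ) (i : ι) :
    hψ.orthogonalFamily.linearIsometry (lp.single 2 i 1) = ψ i := by
  rw [hψ.orthogonalFamily.linearIsometry_apply_single, LinearIsometry.toSpanSingleton_apply,
    one_smul]

theorem partialIsometry_apply_self (hψ : Orthonormal 𝕜 ψ) (hψ' : Orthonormal 𝕜 ψ') (i : ι) :
    hψ.partialIsometry hψ' (ψ i) = ψ' i := by
  classical
  rw [← hψ.linearIsometry_single_one i, partialIsometry_apply_linearIsometry,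
    hψ'.linearIsometry_single_one]

theorem norm_partialIsometry_apply (hψ : Orthonormal 𝕜 ψ) (hψ' : Orthonormal 𝕜 ψ') {y : Y}
    (hy : y ∈ closure (Submodule.span 𝕜 (Set.range ψ) : Set Y)) :
    ‖hψ.partialIsometry hψ' y‖ = ‖y‖ := by
  obtain ⟨f, rfl⟩ := hψ.range_linearIsometry.ge hy
  rw [partialIsometry_apply_linearIsometry, LinearIsometry.norm_map, LinearIsometry.norm_map]

theorem image_partialIsometry (hψ : Orthonormal 𝕜 ψ) (hψ' : Orthonormal 𝕜 ψ') :
    hψ.partialIsometry hψ' '' closure (Submodule.span 𝕜 (Set.range ψ) : Set Y) =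
      closure (Submodule.span 𝕜 (Set.range ψ') : Set Y') := by
  rw [← hψ.range_linearIsometry, ← hψ'.range_linearIsometry, ← Set.range_comp]
  exact congrArg Set.range (funext (partialIsometry_apply_linearIsometry hψ hψ'))

end Orthonormal

section SingularSystem

variable {𝕜 ι X Y : Type*} [RCLike 𝕜] [NormedAddCommGroup X] [InnerProductSpace 𝕜 X]
  [NormedAddCommGroup Y] [NormedSpace 𝕜 Y] {φ : ι → X} {ψ : ι → Y} {s : ι → 𝕜}

theorem Orthonormal.apply_eq_smul_of_forall_eq_tsum (hφ : Orthonormal 𝕜 φ) {A : X → Y}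
    (hA : ∀ x, A x = ∑' n, (s n * inner 𝕜 (φ n) x) • ψ n) (m : ι) : A (φ m) = s m • ψ m := by
  classical
  rw [hA, tsum_eq_single m fun n hn => by simp [orthonormal_iff_ite.mp hφ n m, hn]]
  simp [hφ.1 m]

theorem Orthonormal.closure_range_eq_of_forall_eq_tsum (hφ : Orthonormal 𝕜 φ)
    (hs : ∀ n, s n ≠ 0) (A : X →L[𝕜] Y) (hA : ∀ x, A x = ∑' n, (s n * inner 𝕜 (φ n) x) • ψ n) :
    closure (Set.range A) = closure (Submodule.span 𝕜 (Set.range ψ) : Set Y) := by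
  refine subset_antisymm (closure_minimal ?_ isClosed_closure) (closure_mono ?_)
  · rintro _ ⟨x, rfl⟩
    rw [hA x, ← Submodule.topologicalClosure_coe]
    exact tsum_mem (Submodule.isClosed_topologicalClosure _) fun n =>
      Submodule.le_topologicalClosure _ (Submodule.smul_mem _ _ (Submodule.subset_span ⟨n, rfl⟩))
  · refine Submodule.span_le (p := LinearMap.range (A : X →ₗ[𝕜] Y)).mpr ?_
    rintro _ ⟨n, rfl⟩
    exact ⟨(s n)⁻¹ • φ n, show A _ = _ by
      rw [map_smul, hφ.apply_eq_smul_of_forall_eq_tsum hA, inv_smul_smul₀ (hs n)]⟩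

end SingularSystem

theorem svd_equivalence_isomorphism_general
    {𝕜 X Y X' Y' : Type*} [RCLike 𝕜]
    [NormedAddCommGroup X] [InnerProductSpace 𝕜 X] [CompleteSpace X]
    [NormedAddCommGroup Y] [InnerProductSpace 𝕜 Y] [CompleteSpace Y]
    [NormedAddCommGroup X'] [InnerProductSpace 𝕜 X'] [CompleteSpace X']
    [NormedAddCommGroup Y'] [InnerProductSpace 𝕜 Y'] [CompleteSpace Y']
    (A : X →L[𝕜] Y) (A' : X' →L[𝕜] Y')
    (σ σ' : ℕ → ℝ) (φ : ℕ → X) (ψ : ℕ → Y) (φ' : ℕ → X') (ψ' : ℕ → Y')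
    (hσpos : ∀ n, 0 < σ n)
    (hσ'pos : ∀ n, 0 < σ' n)
    (hφ : Orthonormal 𝕜 φ) (hψ : Orthonormal 𝕜 ψ)
    (hφ' : Orthonormal 𝕜 φ') (hψ' : Orthonormal 𝕜 ψ')
    (hφbasis : (Submodule.span 𝕜 (Set.range φ)).topologicalClosure = ⊤)
    (hφ'basis : (Submodule.span 𝕜 (Set.range φ')).topologicalClosure = ⊤)
    (hArep : ∀ x : X, A x = ∑' n : ℕ, ((σ n : 𝕜) * (inner 𝕜 (φ n) x : 𝕜)) • ψ n)
    (hA'rep : ∀ x : X', A' x = ∑' n : ℕ, ((σ' n : 𝕜) * (inner 𝕜 (φ' n) x : 𝕜)) • ψ' n)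
    (c C : ℝ) (hc : 0 < c)
    (hσσ' : ∀ n, c * σ' n ≤ σ n ∧ σ n ≤ C * σ' n) :
    ∃ (S : X' ≃L[𝕜] X) (U : Y →L[𝕜] Y'),
      (∀ y ∈ closure (Set.range ⇑A), ‖U y‖ = ‖y‖) ∧
      U '' closure (Set.range ⇑A) = closure (Set.range ⇑A') ∧
      A' = U ∘L (A ∘L (S : X' →L[𝕜] X)) := by
  have hσ : ∀ n, (σ n : 𝕜) ≠ 0 := fun n => RCLike.ofReal_ne_zero.mpr (hσpos n).ne'
  have hσ' : ∀ n, (σ' n : 𝕜) ≠ 0 := fun n => RCLike.ofReal_ne_zero.mpr (hσ'pos n).ne'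
  rw [hφ.closure_range_eq_of_forall_eq_tsum hσ A hArep,
    hφ'.closure_range_eq_of_forall_eq_tsum hσ' A' hA'rep]
  have hw : ∀ n, ‖(σ' n : 𝕜) / σ n‖ ≤ c⁻¹ := fun n => by
    rw [← RCLike.ofReal_div, RCLike.norm_of_nonneg (div_pos (hσ'pos n) (hσpos n)).le,
      div_le_iff₀ (hσpos n), inv_mul_eq_div, le_div_iff₀ hc]
    linarith [(hσσ' n).1]
  have hw' : ∀ n, ‖((σ' n : 𝕜) / σ n)⁻¹‖ ≤ C := fun n => by
    rw [inv_div, ← RCLike.ofReal_div, RCLike.norm_of_nonneg (div_pos (hσpos n) (hσ'pos n)).le,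
      div_le_iff₀ (hσ'pos n)]
    exact (hσσ' n).2
  obtain ⟨S, hS⟩ := (HilbertBasis.mk hφ hφbasis.ge).exists_continuousLinearEquiv_apply_eq_smul
    (HilbertBasis.mk hφ' hφ'basis.ge) _ hw hw' fun n => div_ne_zero (hσ' n) (hσ n)
  simp only [HilbertBasis.coe_mk] at hS
  refine ⟨S, hψ.partialIsometry hψ', fun y => hψ.norm_partialIsometry_apply hψ',
    hψ.image_partialIsometry hψ',
    ext_on (Submodule.dense_iff_topologicalClosure_eq_top.mpr hφ'basis) ?_⟩
  rintro _ ⟨n, rfl⟩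
  rw [comp_apply, comp_apply, ContinuousLinearEquiv.coe_coe, hS, map_smul,
    hφ.apply_eq_smul_of_forall_eq_tsum hArep, hφ'.apply_eq_smul_of_forall_eq_tsum hA'rep,
    smul_smul, div_mul_cancel₀ _ (hσ n), map_smul, hψ.partialIsometry_apply_self]

/-- If two compact injective operators between Hilbert spaces have infinite-rank singular value
decompositions with equivalent singular values `c σ'(n) ≤ σ(n) ≤ C σ'(n)`, then `A' = U ∘ A ∘ S`
with `S` a continuous linear equivalence and `U` isometric on the closure of the range of `A`,
mapping it onto the closure of the range of `A'`. -/
theorem svd_equivalence_isomorphism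
    {𝕜 X Y X' Y' : Type*} [RCLike 𝕜]
    [NormedAddCommGroup X] [InnerProductSpace 𝕜 X] [CompleteSpace X]
    [NormedAddCommGroup Y] [InnerProductSpace 𝕜 Y] [CompleteSpace Y]
    [NormedAddCommGroup X'] [InnerProductSpace 𝕜 X'] [CompleteSpace X']
    [NormedAddCommGroup Y'] [InnerProductSpace 𝕜 Y'] [CompleteSpace Y']
    (A : X →L[𝕜] Y) (A' : X' →L[𝕜] Y')
    (hAcompact : IsCompactOperator ⇑A) (hA'compact : IsCompactOperator ⇑A')
    (hAinj : Function.Injective ⇑A) (hA'inj : Function.Injective ⇑A')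
    (σ σ' : ℕ → ℝ) (φ : ℕ → X) (ψ : ℕ → Y) (φ' : ℕ → X') (ψ' : ℕ → Y')
    (hσpos : ∀ n, 0 < σ n) (hσanti : Antitone σ) (hσ0 : Tendsto σ atTop (nhds 0))
    (hσ'pos : ∀ n, 0 < σ' n) (hσ'anti : Antitone σ') (hσ'0 : Tendsto σ' atTop (nhds 0))
    (hφ : Orthonormal 𝕜 φ) (hψ : Orthonormal 𝕜 ψ)
    (hφ' : Orthonormal 𝕜 φ') (hψ' : Orthonormal 𝕜 ψ')
    (hφbasis : (Submodule.span 𝕜 (Set.range φ)).topologicalClosure = ⊤)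
    (hφ'basis : (Submodule.span 𝕜 (Set.range φ')).topologicalClosure = ⊤)
    (hArep : ∀ x : X, A x = ∑' n : ℕ, ((σ n : 𝕜) * (inner 𝕜 (φ n) x : 𝕜)) • ψ n)
    (hA'rep : ∀ x : X', A' x = ∑' n : ℕ, ((σ' n : 𝕜) * (inner 𝕜 (φ' n) x : 𝕜)) • ψ' n)
    (c C : ℝ) (hc : 0 < c) (hC : 0 < C)
    (hσσ' : ∀ n, c * σ' n ≤ σ n ∧ σ n ≤ C * σ' n) :
    ∃ (S : X' ≃L[𝕜] X) (U : Y →L[𝕜] Y'),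
      (∀ y ∈ closure (Set.range ⇑A), ‖U y‖ = ‖y‖) ∧
      U '' closure (Set.range ⇑A) = closure (Set.range ⇑A') ∧
      A' = U ∘L (A ∘L (S : X' →L[𝕜] X)) :=
  svd_equivalence_isomorphism_general A A' σ σ' φ ψ φ' ψ' hσpos hσ'pos hφ hψ hφ' hψ' hφbasis
    hφ'basis hArep hA'rep c C hc hσσ'
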